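/- Classical solutions of Problem 2 are unique: if (u,v,h) is a classical solution of Problem 2 (the heat–wave system coupled through a point mass) on [0,T] with zero initial data u₀ = 0, v₀ = 0, v₁ = 0, then u is identically zero on [0,T]×[−1,0], v is identically zero on [0,T]×[0,1], and h is identically zero on [0,T]. Equivalently, two classical solutions of Problem 2 with the same initial data coincide. -/

import Mathlib

open Set Real MeasureTheory intervalIntegral

/-- A classical solution of the heat equation `∂_t u = ∂_x² u` on `[0,T] × [−1,0]`:
`u` is continuous on the closed rectangle, the partial derivatives `ut = ∂_t u`,
`ux = ∂_x u`, `uxx = ∂_x² u` exist and are continuous there, and `∂_t u = ∂_x² u`. -/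
structure IsHeatSol (T : ℝ) (u ut ux uxx : ℝ → ℝ → ℝ) : Prop where
  contu : ContinuousOn (fun p : ℝ × ℝ => u p.1 p.2) (Icc 0 T ×ˢ Icc (-1) 0)
  hut : ∀ t ∈ Icc (0:ℝ) T, ∀ x ∈ Icc (-1:ℝ) 0, HasDerivAt (fun τ => u τ x) (ut t x) t
  hux : ∀ t ∈ Icc (0:ℝ) T, ∀ x ∈ Icc (-1:ℝ) 0, HasDerivAt (fun y => u t y) (ux t x) x
  huxx : ∀ t ∈ Icc (0:ℝ) T, ∀ x ∈ Icc (-1:ℝ) 0, HasDerivAt (fun y => ux t y) (uxx t x) x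
  contut : ContinuousOn (fun p : ℝ × ℝ => ut p.1 p.2) (Icc 0 T ×ˢ Icc (-1) 0)
  contux : ContinuousOn (fun p : ℝ × ℝ => ux p.1 p.2) (Icc 0 T ×ˢ Icc (-1) 0)
  contuxx : ContinuousOn (fun p : ℝ × ℝ => uxx p.1 p.2) (Icc 0 T ×ˢ Icc (-1) 0)
  heat : ∀ t ∈ Icc (0:ℝ) T, ∀ x ∈ Icc (-1:ℝ) 0, ut t x = uxx t x

/-- A classical solution of the wave equation `∂_t² v = ∂_x² v` on `[0,T] × [0,1]`:
`v` is twice continuously differentiable up to the boundary, with first partial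
derivatives `vt`, `vx`, second partial derivatives `vtt`, `vxx` and mixed partial
derivative `vtx`, all continuous on the closed rectangle. -/
structure IsWaveSol (T : ℝ) (v vt vx vtt vtx vxx : ℝ → ℝ → ℝ) : Prop where
  contv : ContinuousOn (fun p : ℝ × ℝ => v p.1 p.2) (Icc 0 T ×ˢ Icc 0 1)
  hvt : ∀ t ∈ Icc (0:ℝ) T, ∀ x ∈ Icc (0:ℝ) 1, HasDerivAt (fun τ => v τ x) (vt t x) t
  hvx : ∀ t ∈ Icc (0:ℝ) T, ∀ x ∈ Icc (0:ℝ) 1, HasDerivAt (fun y => v t y) (vx t x) x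
  hvtt : ∀ t ∈ Icc (0:ℝ) T, ∀ x ∈ Icc (0:ℝ) 1, HasDerivAt (fun τ => vt τ x) (vtt t x) t
  hvtx : ∀ t ∈ Icc (0:ℝ) T, ∀ x ∈ Icc (0:ℝ) 1, HasDerivAt (fun y => vt t y) (vtx t x) x
  hvxt : ∀ t ∈ Icc (0:ℝ) T, ∀ x ∈ Icc (0:ℝ) 1, HasDerivAt (fun τ => vx τ x) (vtx t x) t
  hvxx : ∀ t ∈ Icc (0:ℝ) T, ∀ x ∈ Icc (0:ℝ) 1, HasDerivAt (fun y => vx t y) (vxx t x) x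
  contvt : ContinuousOn (fun p : ℝ × ℝ => vt p.1 p.2) (Icc 0 T ×ˢ Icc 0 1)
  contvx : ContinuousOn (fun p : ℝ × ℝ => vx p.1 p.2) (Icc 0 T ×ˢ Icc 0 1)
  contvtt : ContinuousOn (fun p : ℝ × ℝ => vtt p.1 p.2) (Icc 0 T ×ˢ Icc 0 1)
  contvtx : ContinuousOn (fun p : ℝ × ℝ => vtx p.1 p.2) (Icc 0 T ×ˢ Icc 0 1)
  contvxx : ContinuousOn (fun p : ℝ × ℝ => vxx p.1 p.2) (Icc 0 T ×ˢ Icc 0 1)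
  wave : ∀ t ∈ Icc (0:ℝ) T, ∀ x ∈ Icc (0:ℝ) 1, vtt t x = vxx t x

/-- Problem 2 (the heat–wave system coupled through a point mass) on `[0,T]` with
initial data `u₀, v₀, v₁`: the heat equation on `[0,T] × [−1,0]` and the wave
equation on `[0,T] × [0,1]`, coupled at the interface `x = 0` through a point mass
with displacement `h` (a twice continuously differentiable function with first and
second derivatives `h'` and `h''`), via `u(t,0) = h'(t) = ∂_t v(t,0)` and Newton's
law `h''(t) = ∂_x v(t,0) − ∂_x u(t,0)`, with homogeneous boundary conditions
`u(t,−1) = v(t,1) = 0` and `h(0) = h'(0) = 0`. -/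
structure Problem2 (T : ℝ) (u ut ux uxx v vt vx vtt vtx vxx : ℝ → ℝ → ℝ)
    (h h' h'' : ℝ → ℝ) (u₀ v₀ v₁ : ℝ → ℝ) : Prop where
  heatSol : IsHeatSol T u ut ux uxx
  waveSol : IsWaveSol T v vt vx vtt vtx vxx
  hd : ∀ t ∈ Icc (0:ℝ) T, HasDerivAt h (h' t) t
  hdd : ∀ t ∈ Icc (0:ℝ) T, HasDerivAt h' (h'' t) t
  conth'' : ContinuousOn h'' (Icc 0 T)
  kinematic1 : ∀ t ∈ Icc (0:ℝ) T, u t 0 = h' t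
  kinematic2 : ∀ t ∈ Icc (0:ℝ) T, h' t = vt t 0
  newton : ∀ t ∈ Icc (0:ℝ) T, h'' t = vx t 0 - ux t 0
  bdryu : ∀ t ∈ Icc (0:ℝ) T, u t (-1) = 0
  bdryv : ∀ t ∈ Icc (0:ℝ) T, v t 1 = 0
  initu : ∀ x ∈ Icc (-1:ℝ) 0, u 0 x = u₀ x
  inith : h 0 = 0
  inith' : h' 0 = 0
  initv : ∀ x ∈ Icc (0:ℝ) 1, v 0 x = v₀ x
  initvt : ∀ x ∈ Icc (0:ℝ) 1, vt 0 x = v₁ x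

open Filter Topology
open scoped Interval

/-!
Energy method. Along a solution, the energy
`E(t) = ∫₋₁⁰ u² + ∫₀¹ (v_t² + v_x²) + h'²`
satisfies `E' = -2 ∫₋₁⁰ u_x² ≤ 0`: integrating by parts in `x`, the boundary terms at `x = -1`
and `x = 1` vanish by the boundary conditions, and those at the interface `x = 0` cancel against
`d/dt (h')² = 2 h' h''` by the coupling conditions. With zero data `E(0) = 0`, so `E ≡ 0`, which
forces `u = 0`, `v_t = 0` and `h' = 0`; integrating in time gives `v = 0` and `h = 0`.
-/

theorem ContinuousOn.intervalIntegral_of_prod {F : ℝ → ℝ → ℝ} {t₁ t₂ a b : ℝ} (hab : a ≤ b)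
    (hF : ContinuousOn (fun p : ℝ × ℝ => F p.1 p.2) (Icc t₁ t₂ ×ˢ Icc a b)) :
    ContinuousOn (fun t => ∫ x in a..b, F t x) (Icc t₁ t₂) := by
  rcases lt_or_ge t₂ t₁ with ht₁₂ | ht₁₂
  · simp [Icc_eq_empty_of_lt ht₁₂]
  -- Extend `F` continuously to the whole plane by precomposing with the projections onto the
  -- rectangle, and use continuity of parametric integrals of continuous functions.
  let G : ℝ → ℝ → ℝ := fun t x => F (projIcc t₁ t₂ ht₁₂ t) (projIcc a b hab x)
  have hG : Continuous (fun p : ℝ × ℝ => G p.1 p.2) :=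
    hF.comp_continuous
      (f := fun p : ℝ × ℝ => ((projIcc t₁ t₂ ht₁₂ p.1 : ℝ), (projIcc a b hab p.2 : ℝ))) (by fun_prop)
      fun p => ⟨(projIcc t₁ t₂ ht₁₂ p.1).2, (projIcc a b hab p.2).2⟩
  refine (continuous_parametric_intervalIntegral_of_continuous' (f := G) hG a b).continuousOn
    |>.congr fun t ht => integral_congr fun x hx => ?_
  rw [uIcc_of_le hab] at hx
  simp [G, projIcc_of_mem _ ht, projIcc_of_mem _ hx]

theorem hasDerivAt_intervalIntegral_of_continuousOn_prod {F F' : ℝ → ℝ → ℝ} {t₁ t₂ a b t₀ : ℝ}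
    (hab : a ≤ b) (ht₀ : t₀ ∈ Ioo t₁ t₂) (hF : ∀ t ∈ Icc t₁ t₂, ContinuousOn (F t) (Icc a b))
    (hF' : ContinuousOn (fun p : ℝ × ℝ => F' p.1 p.2) (Icc t₁ t₂ ×ˢ Icc a b))
    (hderiv : ∀ t ∈ Icc t₁ t₂, ∀ x ∈ Icc a b, HasDerivAt (F · x) (F' t x) t) :
    HasDerivAt (fun t => ∫ x in a..b, F t x) (∫ x in a..b, F' t₀ x) t₀ := by
  obtain ⟨C, hC⟩ := (isCompact_Icc.prod isCompact_Icc).exists_bound_of_continuousOn hF'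
  have hmeas {f : ℝ → ℝ} (hf : ContinuousOn f (Icc a b)) :
      AEStronglyMeasurable f (volume.restrict (Ι a b)) := by
    rw [uIoc_of_le hab]
    exact (hf.mono Ioc_subset_Icc_self).aestronglyMeasurable measurableSet_Ioc
  have hIoc {x : ℝ} (hx : x ∈ Ι a b) : x ∈ Icc a b := by
    rw [uIoc_of_le hab] at hx
    exact Ioc_subset_Icc_self hx
  have ht₀' := Ioo_subset_Icc_self ht₀
  refine (hasDerivAt_integral_of_dominated_loc_of_deriv_le (bound := fun _ => C)
    (Icc_mem_nhds ht₀.1 ht₀.2) ?_ ((hF t₀ ht₀').intervalIntegrable_of_Icc hab)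
    (hmeas (hF'.uncurry_left t₀ ht₀')) ?_ intervalIntegrable_const ?_).2
  · filter_upwards [Icc_mem_nhds ht₀.1 ht₀.2] with t ht using hmeas (hF t ht)
  · exact .of_forall fun x hx t ht => hC (t, x) ⟨ht, hIoc hx⟩
  · exact .of_forall fun x hx t ht => hderiv t ht x (hIoc hx)

theorem hasDerivAt_intervalIntegral_sq {G Gt : ℝ → ℝ → ℝ} {t₁ t₂ a b t₀ : ℝ}
    (hab : a ≤ b) (ht₀ : t₀ ∈ Ioo t₁ t₂)
    (hG : ContinuousOn (fun p : ℝ × ℝ => G p.1 p.2) (Icc t₁ t₂ ×ˢ Icc a b))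
    (hGt : ContinuousOn (fun p : ℝ × ℝ => Gt p.1 p.2) (Icc t₁ t₂ ×ˢ Icc a b))
    (hderiv : ∀ t ∈ Icc t₁ t₂, ∀ x ∈ Icc a b, HasDerivAt (G · x) (Gt t x) t) :
    HasDerivAt (fun t => ∫ x in a..b, G t x ^ 2) (2 * ∫ x in a..b, G t₀ x * Gt t₀ x) t₀ := by
  rw [← intervalIntegral.integral_const_mul]
  refine hasDerivAt_intervalIntegral_of_continuousOn_prod (F' := fun t x => 2 * (G t x * Gt t x))
    hab ht₀ (fun t ht => (hG.uncurry_left t ht).pow 2) (continuousOn_const.mul (hG.mul hGt))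
    fun t ht x hx => ((hderiv t ht x hx).pow 2).congr_deriv ?_
  ring

theorem HasDerivAt.eq_zero_of_eqOn_zero {f : ℝ → ℝ} {f' a b x : ℝ} (hab : a < b)
    (hx : x ∈ Icc a b) (hf : EqOn f 0 (Icc a b)) (hderiv : HasDerivAt f f' x) : f' = 0 :=
  (uniqueDiffOn_Icc hab x hx).eq_deriv _ hderiv.hasDerivWithinAt
    ((hasDerivWithinAt_const x _ 0).congr hf (hf hx))

theorem constant_of_hasDerivAt_eq_zero {f f' : ℝ → ℝ} {a b : ℝ}
    (hderiv : ∀ s ∈ Icc a b, HasDerivAt f (f' s) s) (hzero : ∀ s ∈ Icc a b, f' s = 0) :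
    ∀ s ∈ Icc a b, f s = f a :=
  constant_of_has_deriv_right_zero (fun s hs => (hderiv s hs).continuousAt.continuousWithinAt)
    fun s hs => hzero s (Ico_subset_Icc_self hs) ▸
      (hderiv s (Ico_subset_Icc_self hs)).hasDerivWithinAt

theorem intervalIntegral_sq_nonneg (f : ℝ → ℝ) {a b : ℝ} (hab : a ≤ b) :
    0 ≤ ∫ x in a..b, f x ^ 2 :=
  integral_nonneg hab fun x _ => sq_nonneg (f x)

theorem eqOn_zero_of_integral_sq_eq_zero {f : ℝ → ℝ} {a b : ℝ} (hab : a < b)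
    (hf : ContinuousOn f (Icc a b)) (h0 : ∫ x in a..b, f x ^ 2 = 0) : EqOn f 0 (Icc a b) := by
  intro x hx
  by_contra hfx
  have hpos : 0 < ∫ x in a..b, f x ^ 2 :=
    integral_pos hab (hf.pow 2) (fun y _ => sq_nonneg _) ⟨x, hx, sq_pos_of_ne_zero hfx⟩
  exact hpos.ne' h0

theorem IsHeatSol.integral_mul_timeDeriv {T : ℝ} {u ut ux uxx : ℝ → ℝ → ℝ}
    (hu : IsHeatSol T u ut ux uxx) {t : ℝ} (ht : t ∈ Icc 0 T) :
    ∫ x in (-1:ℝ)..0, u t x * ut t x =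
      u t 0 * ux t 0 - u t (-1) * ux t (-1) - ∫ x in (-1:ℝ)..0, ux t x ^ 2 := by
  have hIcc : uIcc (-1:ℝ) 0 = Icc (-1) 0 := uIcc_of_le (by norm_num)
  rw [integral_congr fun x hx => congrArg (u t x * ·) (hu.heat t ht x (hIcc ▸ hx))]
  simp only [sq]
  exact integral_mul_deriv_eq_deriv_mul (fun x hx => hu.hux t ht x (hIcc ▸ hx))
    (fun x hx => hu.huxx t ht x (hIcc ▸ hx))
    ((hu.contux.uncurry_left t ht).intervalIntegrable_of_Icc (by norm_num))
    ((hu.contuxx.uncurry_left t ht).intervalIntegrable_of_Icc (by norm_num))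

theorem IsWaveSol.integral_mul_timeDeriv {T : ℝ} {v vt vx vtt vtx vxx : ℝ → ℝ → ℝ}
    (hv : IsWaveSol T v vt vx vtt vtx vxx) {t : ℝ} (ht : t ∈ Icc 0 T) :
    (∫ x in (0:ℝ)..1, vt t x * vtt t x) + ∫ x in (0:ℝ)..1, vx t x * vtx t x =
      vt t 1 * vx t 1 - vt t 0 * vx t 0 := by
  have hIcc : uIcc (0:ℝ) 1 = Icc 0 1 := uIcc_of_le zero_le_one
  rw [integral_congr fun x hx => congrArg (vt t x * ·) (hv.wave t ht x (hIcc ▸ hx)),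
    integral_mul_deriv_eq_deriv_mul (fun x hx => hv.hvtx t ht x (hIcc ▸ hx))
      (fun x hx => hv.hvxx t ht x (hIcc ▸ hx))
      ((hv.contvtx.uncurry_left t ht).intervalIntegrable_of_Icc zero_le_one)
      ((hv.contvxx.uncurry_left t ht).intervalIntegrable_of_Icc zero_le_one)]
  simp only [mul_comm (vx t _)]
  ring

namespace Problem2

variable {T : ℝ} {u ut ux uxx v vt vx vtt vtx vxx : ℝ → ℝ → ℝ} {h h' h'' u₀ v₀ v₁ : ℝ → ℝ}

noncomputable def energy (u vt vx : ℝ → ℝ → ℝ) (h' : ℝ → ℝ) (t : ℝ) : ℝ :=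
  (∫ x in (-1:ℝ)..0, u t x ^ 2) + (∫ x in (0:ℝ)..1, vt t x ^ 2) +
    (∫ x in (0:ℝ)..1, vx t x ^ 2) + h' t ^ 2

theorem energy_nonneg (t : ℝ) : 0 ≤ energy u vt vx h' t := by
  have hu := intervalIntegral_sq_nonneg (u t) (by norm_num : (-1:ℝ) ≤ 0)
  have hvt := intervalIntegral_sq_nonneg (vt t) zero_le_one
  have hvx := intervalIntegral_sq_nonneg (vx t) zero_le_one
  unfold energy
  positivity

theorem continuousOn_energy (hP : Problem2 T u ut ux uxx v vt vx vtt vtx vxx h h' h'' u₀ v₀ v₁) :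
    ContinuousOn (energy u vt vx h') (Icc 0 T) :=
  (((hP.heatSol.contu.pow 2).intervalIntegral_of_prod (by norm_num)).add
    ((hP.waveSol.contvt.pow 2).intervalIntegral_of_prod zero_le_one)).add
    ((hP.waveSol.contvx.pow 2).intervalIntegral_of_prod zero_le_one) |>.add
    fun t ht => (hP.hdd t ht).continuousAt.continuousWithinAt.pow 2

theorem hasDerivAt_energy (hP : Problem2 T u ut ux uxx v vt vx vtt vtx vxx h h' h'' u₀ v₀ v₁)
    {t : ℝ} (ht : t ∈ Ioo 0 T) :
    HasDerivAt (energy u vt vx h') (-2 * ∫ x in (-1:ℝ)..0, ux t x ^ 2) t := by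
  obtain ⟨hu, hv, -, hdd, -, kin₁, kin₂, newton, bdryu, bdryv, -⟩ := hP
  have ht' := Ioo_subset_Icc_self ht
  have hvt₁ : vt t 1 = 0 :=
    HasDerivAt.eq_zero_of_eqOn_zero (ht.1.trans ht.2) ht' bdryv
      (hv.hvt t ht' 1 (right_mem_Icc.2 zero_le_one))
  refine ((((hasDerivAt_intervalIntegral_sq (by norm_num) ht hu.contu hu.contut hu.hut).add
    (hasDerivAt_intervalIntegral_sq zero_le_one ht hv.contvt hv.contvtt hv.hvtt)).add
    (hasDerivAt_intervalIntegral_sq zero_le_one ht hv.contvx hv.contvtx hv.hvxt)).add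
    ((hdd t ht').pow 2)).congr_deriv ?_
  -- The interface terms cancel: `u = h' = v_t` and `h'' = v_x - u_x` at `x = 0`.
  have hheat := hu.integral_mul_timeDeriv ht'
  have hwave := hv.integral_mul_timeDeriv ht'
  rw [bdryu t ht', kin₁ t ht'] at hheat
  rw [hvt₁, ← kin₂ t ht'] at hwave
  rw [newton t ht']
  push_cast
  linear_combination 2 * hheat + 2 * hwave

theorem antitoneOn_energy (hP : Problem2 T u ut ux uxx v vt vx vtt vtx vxx h h' h'' u₀ v₀ v₁) :
    AntitoneOn (energy u vt vx h') (Icc 0 T) := by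
  refine antitoneOn_of_hasDerivWithinAt_nonpos (convex_Icc 0 T) hP.continuousOn_energy
    (fun t ht => (hP.hasDerivAt_energy (by rwa [interior_Icc] at ht)).hasDerivWithinAt)
    fun t _ => ?_
  have := intervalIntegral_sq_nonneg (ux t) (by norm_num : (-1:ℝ) ≤ 0)
  linarith

theorem energy_zero (hP : Problem2 T u ut ux uxx v vt vx vtt vtx vxx h h' h''
    (fun _ => 0) (fun _ => 0) (fun _ => 0)) (hT : 0 ≤ T) : energy u vt vx h' 0 = 0 := by
  have hsq {f : ℝ → ℝ} {a b : ℝ} (hab : a ≤ b) (hf : EqOn f 0 (Icc a b)) :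
      ∫ x in a..b, f x ^ 2 = 0 := by
    have hf₂ : EqOn (fun x => f x ^ 2) 0 (uIcc a b) := fun x hx => by
      simp [hf (uIcc_of_le hab ▸ hx)]
    rw [integral_congr hf₂, Pi.zero_def, intervalIntegral.integral_zero]
  have hvx : EqOn (vx 0) 0 (Icc 0 1) := fun x hx =>
    HasDerivAt.eq_zero_of_eqOn_zero zero_lt_one hx hP.initv (hP.waveSol.hvx 0 ⟨le_rfl, hT⟩ x hx)
  rw [energy, hsq (by norm_num) hP.initu, hsq zero_le_one hP.initvt, hsq zero_le_one hvx,
    hP.inith']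
  ring

theorem energy_eq_zero (hP : Problem2 T u ut ux uxx v vt vx vtt vtx vxx h h' h''
    (fun _ => 0) (fun _ => 0) (fun _ => 0)) (hT : 0 ≤ T) {t : ℝ} (ht : t ∈ Icc 0 T) :
    energy u vt vx h' t = 0 :=
  le_antisymm (hP.energy_zero hT ▸ hP.antitoneOn_energy ⟨le_rfl, hT⟩ ht ht.1) (energy_nonneg t)

theorem eqOn_zero_of_energy_eq_zero
    (hP : Problem2 T u ut ux uxx v vt vx vtt vtx vxx h h' h'' u₀ v₀ v₁) {t : ℝ}
    (ht : t ∈ Icc 0 T) (hE : energy u vt vx h' t = 0) :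
    EqOn (u t) 0 (Icc (-1) 0) ∧ EqOn (vt t) 0 (Icc 0 1) ∧ h' t = 0 := by
  have hu := intervalIntegral_sq_nonneg (u t) (by norm_num : (-1:ℝ) ≤ 0)
  have hvt := intervalIntegral_sq_nonneg (vt t) zero_le_one
  have hvx := intervalIntegral_sq_nonneg (vx t) zero_le_one
  have hh' := sq_nonneg (h' t)
  unfold energy at hE
  refine ⟨eqOn_zero_of_integral_sq_eq_zero (by norm_num)
      (hP.heatSol.contu.uncurry_left t ht) (by linarith),
    eqOn_zero_of_integral_sq_eq_zero zero_lt_one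
      (hP.waveSol.contvt.uncurry_left t ht) (by linarith),
    pow_eq_zero_iff two_ne_zero |>.1 (by linarith)⟩

end Problem2

/-- Uniqueness for Problem 2: a classical solution `(u,v,h)` of the
heat–wave system coupled through a point mass on `[0,T]` with zero initial data
vanishes identically. -/
theorem problem2_uniqueness (T : ℝ) (hT : 0 ≤ T)
    (u ut ux uxx v vt vx vtt vtx vxx : ℝ → ℝ → ℝ) (h h' h'' : ℝ → ℝ)
    (hP : Problem2 T u ut ux uxx v vt vx vtt vtx vxx h h' h''
      (fun _ => 0) (fun _ => 0) (fun _ => 0)) :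
    (∀ t ∈ Icc (0:ℝ) T, ∀ x ∈ Icc (-1:ℝ) 0, u t x = 0) ∧
    (∀ t ∈ Icc (0:ℝ) T, ∀ x ∈ Icc (0:ℝ) 1, v t x = 0) ∧
    (∀ t ∈ Icc (0:ℝ) T, h t = 0) := by
  have hzero {t : ℝ} (ht : t ∈ Icc 0 T) :=
    hP.eqOn_zero_of_energy_eq_zero ht (hP.energy_eq_zero hT ht)
  refine ⟨fun t ht => (hzero ht).1, fun t ht x hx => ?_, fun t ht => ?_⟩
  all_goals have hsub : Icc 0 t ⊆ Icc 0 T := Icc_subset_Icc_right ht.2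
  · rw [constant_of_hasDerivAt_eq_zero (fun s hs => hP.waveSol.hvt s (hsub hs) x hx)
      (fun s hs => (hzero (hsub hs)).2.1 hx) t (right_mem_Icc.2 ht.1)]
    exact hP.initv x hx
  · rw [constant_of_hasDerivAt_eq_zero (fun s hs => hP.hd s (hsub hs))
      (fun s hs => (hzero (hsub hs)).2.2) t (right_mem_Icc.2 ht.1)]
    exact hP.inith
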